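/- arXiv:1205.5991 — 5 statements merged into one kernel-verified Lean document; each statement's English description precedes it below -/
import Mathlib

section
/- For every positive integer n, p(n) = Σ_{k≥1} (-1)^{k+1} ( p(n − k(3k−1)/2) + p(n − k(3k+1)/2) ), where p(m) = 0 for m < 0 and p(0) = 1, and the sum has only finitely many nonzero terms. -/
/-!
Euler's product gives `∑ p(n) X ^ n = ∏ 1 / (1 - X ^ (i + 1))`, and the pentagonal number theorem
gives `∏ (1 - X ^ (i + 1)) = ∑ (-1) ^ k X ^ (k(3k-1)/2)` (sum over `k ∈ ℤ`). Hence the product of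
the two series is `1`, and comparing coefficients of `X ^ n` for `n ≥ 1` gives the recursion. Only
`|k| ≤ n` contribute, since `|k| ≤ k(3k-1)/2`.
-/

noncomputable def partitionZ (m : ℤ) : ℤ :=
  if h : 0 ≤ m then (Fintype.card (Nat.Partition m.toNat) : ℤ) else 0

open Finset PowerSeries PowerSeries.WithPiTopology

theorem sum_Icc_neg_eq_add_sum_Icc_one {M : Type*} [AddCommMonoid M] (f : ℤ → M) (n : ℕ) :
    ∑ k ∈ Icc (-n : ℤ) n, f k = f 0 + ∑ k ∈ Icc (1 : ℤ) n, (f k + f (-k)) := by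
  induction n with
  | zero => simp
  | succ n ih =>
    have hsymm : Icc (-(n + 1) : ℤ) (n + 1) =
        insert ((n : ℤ) + 1) (insert (-((n : ℤ) + 1)) (Icc (-(n : ℤ)) n)) := by
      ext; simp only [mem_insert, mem_Icc]; omega
    have hpos : Icc (1 : ℤ) (n + 1) = insert ((n : ℤ) + 1) (Icc (1 : ℤ) n) := by
      ext; simp only [mem_insert, mem_Icc]; omega
    rw [Nat.cast_succ, hsymm, hpos, sum_insert (by simp only [mem_insert, mem_Icc]; omega),
      sum_insert (by simp), ih, sum_insert (by simp)]
    abel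

theorem natCast_pentagonal_neg (k : ℤ) : (pentagonal (-k) : ℤ) = k * (3 * k + 1) / 2 := by
  rw [natCast_pentagonal]; ring_nf

theorem abs_le_pentagonal (k : ℤ) : |k| ≤ pentagonal k := by
  have := two_mul_natCast_pentagonal k
  rcases abs_cases k with ⟨hk, _⟩ | ⟨hk, _⟩ <;> nlinarith

theorem neg_one_pow_toNat_add_one {k : ℤ} (hk : 0 ≤ k) :
    (-1 : ℤ) ^ (k.toNat + 1) = -(k.negOnePow : ℤ) := by
  lift k to ℕ using hk
  rw [Int.toNat_natCast, Int.coe_negOnePow_natCast, pow_succ, mul_neg_one]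

noncomputable def partitionSeries (R : Type*) [Semiring R] : R⟦X⟧ :=
  PowerSeries.mk fun n ↦ (Fintype.card n.Partition : R)

theorem coeff_partitionSeries (R : Type*) [Semiring R] (n : ℕ) :
    coeff n (partitionSeries R) = Fintype.card n.Partition :=
  coeff_mk _ _

theorem hasProd_partitionSeries (R : Type*) [CommSemiring R] [TopologicalSpace R] [T2Space R]
    [IsTopologicalSemiring R] :
    HasProd (fun i ↦ ∑' j : ℕ, (X : R⟦X⟧) ^ ((i + 1) * j)) (partitionSeries R) := by
  simpa [partitionSeries, Nat.Partition.restricted] using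
    Nat.Partition.hasProd_powerSeriesMk_card_restricted R (fun _ ↦ True)

theorem pentagonalSeries_mul_partitionSeries (R : Type*) [CommRing R] :
    pentagonalSeries R * partitionSeries R = 1 := by
  -- The identity is topology-free; the discrete topology lets us use the `HasProd` forms.
  let _ : TopologicalSpace R := ⊥
  have _ : DiscreteTopology R := ⟨rfl⟩
  have h := (hasProd_one_sub_X_pow R).mul (hasProd_partitionSeries R)
  have hgeom : ∀ i : ℕ, (1 - X ^ (i + 1)) * ∑' j : ℕ, (X : R⟦X⟧) ^ ((i + 1) * j) = 1 := fun i ↦ by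
    simp_rw [pow_mul]
    rw [mul_comm, tsum_pow_mul_one_sub_of_constantCoeff_eq_zero (by simp)]
  simp only [hgeom] at h
  exact h.unique hasProd_one

theorem partitionZ_of_neg {m : ℤ} (hm : m < 0) : partitionZ m = 0 :=
  dif_neg hm.not_ge

theorem partitionZ_natCast_sub (n m : ℕ) :
    partitionZ (n - m) = if m ≤ n then (Fintype.card (Nat.Partition (n - m)) : ℤ) else 0 := by
  unfold partitionZ
  split_ifs
  · rw [show ((n : ℤ) - m).toNat = n - m by omega]
  · omega
  · omega
  · rfl

theorem partitionZ_sub_pentagonal_of_lt_abs {n k : ℤ} (h : n < |k|) :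
    partitionZ (n - pentagonal k) = 0 :=
  partitionZ_of_neg (by linarith [abs_le_pentagonal k])

theorem coeff_X_pow_mul_partitionSeries (n m : ℕ) :
    coeff n (X ^ m * partitionSeries ℤ) = partitionZ (n - m) := by
  rw [coeff_X_pow_mul', coeff_partitionSeries, partitionZ_natCast_sub]

theorem hasSum_negOnePow_mul_partitionZ_sub_pentagonal (n : ℕ) :
    HasSum (fun k : ℤ ↦ (k.negOnePow : ℤ) * partitionZ (n - pentagonal k))
      (if n = 0 then 1 else 0) := by
  have h := ((hasSum_pentagonalSeries ℤ).mul_right (partitionSeries ℤ)).map (coeff n)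
    (continuous_coeff ℤ n)
  rw [pentagonalSeries_mul_partitionSeries, coeff_one] at h
  convert h using 1
  ext k
  rw [Function.comp_apply, mul_assoc, ← zsmul_eq_mul, map_zsmul, coeff_X_pow_mul_partitionSeries,
    smul_eq_mul]

theorem sum_Icc_negOnePow_mul_partitionZ_sub_pentagonal {n : ℕ} (hn : n ≠ 0) :
    ∑ k ∈ Icc (-n : ℤ) n, (k.negOnePow : ℤ) * partitionZ (n - pentagonal k) = 0 := by
  have h := hasSum_negOnePow_mul_partitionZ_sub_pentagonal n
  rw [if_neg hn] at h
  refine (h.unique (hasSum_sum_of_ne_finset_zero fun k hk ↦ ?_)).symm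
  rw [mem_Icc, ← abs_le, not_le] at hk
  rw [partitionZ_sub_pentagonal_of_lt_abs hk, mul_zero]

theorem partitionZ_eq_neg_sum_Icc {n : ℕ} (hn : n ≠ 0) :
    partitionZ n = -∑ k ∈ Icc (1 : ℤ) n,
      (k.negOnePow : ℤ) * (partitionZ (n - pentagonal k) + partitionZ (n - pentagonal (-k))) := by
  have h := sum_Icc_negOnePow_mul_partitionZ_sub_pentagonal hn
  simp only [sum_Icc_neg_eq_add_sum_Icc_one, Int.negOnePow_neg, ← mul_add, Int.negOnePow_zero,
    show pentagonal 0 = 0 from rfl, Units.val_one, one_mul, Nat.cast_zero, sub_zero] at h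
  linear_combination h

theorem euler_pentagonal_recursion (n : ℤ) (hn : 1 ≤ n) :
    partitionZ n =
      ∑ k ∈ Finset.Icc (1 : ℤ) n,
        (-1) ^ (k.toNat + 1) *
          (partitionZ (n - k * (3 * k - 1) / 2) + partitionZ (n - k * (3 * k + 1) / 2)) ∧
    ∀ k : ℤ, n < k →
      (-1 : ℤ) ^ (k.toNat + 1) *
          (partitionZ (n - k * (3 * k - 1) / 2) + partitionZ (n - k * (3 * k + 1) / 2)) = 0 := by
  simp_rw [← natCast_pentagonal, ← natCast_pentagonal_neg]
  refine ⟨?_, fun k hk ↦ ?_⟩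
  · lift n to ℕ using by omega
    rw [partitionZ_eq_neg_sum_Icc (by omega), ← sum_neg_distrib]
    refine sum_congr rfl fun k hk ↦ ?_
    rw [neg_one_pow_toNat_add_one (zero_le_one.trans (mem_Icc.1 hk).1), neg_mul]
  · have hk' : n < |k| := lt_abs.2 (.inl hk)
    rw [partitionZ_sub_pentagonal_of_lt_abs hk',
      partitionZ_sub_pentagonal_of_lt_abs (by rwa [abs_neg]), add_zero, mul_zero]
end

section
/- For all integers n ≥ 65, M(n, ⌈n^{1/2}⌉) < 1/2. -/
/-!
With `x₀ = π √(2/3)` and the two constants `c₁`, `c₂` of `M`,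
`M(n, N) = c₁ / √N + c₂ √(N / (n - 1)) sinh (x₀ √n / N)`, and
`√n ≤ N < √n + 1` for `N = ⌈√n⌉`.

For `N ≥ 10` crude bounds suffice: `1/√N ≤ 1/√10`, `N/(n - 1) ≤ 1/8` (as `√n ≥ 9`) and
`sinh (x₀ √n / N) ≤ sinh x₀`.

For `N = 9`, i.e. `65 ≤ n ≤ 81`, the bound is tight (`M(81, 9) ≈ 0.49984`), so the second term
is compared with its value at `n = 81`. For `x ≤ y` we have
`sinh x ≤ sinh y · e^(x - y) ≤ sinh y / (1 + y - x)`, and a polynomial inequality in `√n` shows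
that this loss in `sinh` outweighs the growth of `√(9 / (n - 1))` as `n` decreases from `81`.
-/

open Real

/-- Rademacher's bound `M(n, N)` for the remainder in the
Hardy-Ramanujan-Rademacher formula. -/
noncomputable def radeM (n N : ℕ) : ℝ :=
  44 * π ^ 2 / (225 * Real.sqrt 3) * ((N : ℝ)) ^ (-(1 / 2 : ℝ)) +
    π * Real.sqrt 2 / 75 * ((N : ℝ) / ((n : ℝ) - 1)) ^ ((1 / 2 : ℝ)) *
      Real.sinh (π / (N : ℝ) * Real.sqrt (2 * (n : ℝ) / 3))

namespace Real

theorem sinh_le_of_exp_le {x B : ℝ} (h : exp x ≤ B) : sinh x ≤ (B - B⁻¹) / 2 := by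
  have hinv : B⁻¹ ≤ exp (-x) := by
    rw [exp_neg]; exact inv_anti₀ (exp_pos x) h
  rw [sinh_eq]; linarith

theorem sinh_le_sinh_mul_exp_sub {x y : ℝ} (h : x ≤ y) : sinh x ≤ sinh y * exp (x - y) := by
  have hxy : exp (x - 2 * y) ≤ exp (-x) := exp_le_exp.2 (by linarith)
  have hx : exp (-y) * exp (x - y) = exp (x - 2 * y) := by rw [← exp_add]; ring_nf
  have hy : exp y * exp (x - y) = exp x := by rw [← exp_add]; ring_nf
  rw [sinh_eq, sinh_eq, div_mul_eq_mul_div, sub_mul, hx, hy]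
  linarith

theorem sinh_le_sinh_div_one_add_sub {x y : ℝ} (hy : 0 ≤ y) (h : x ≤ y) :
    sinh x ≤ sinh y / (1 + (y - x)) := by
  have hpos : 0 < 1 + (y - x) := by linarith
  calc sinh x ≤ sinh y * exp (x - y) := sinh_le_sinh_mul_exp_sub h
    _ = sinh y / exp (y - x) := by rw [div_eq_mul_inv, ← exp_neg, neg_sub]
    _ ≤ sinh y / (1 + (y - x)) := by
        gcongr
        linarith [add_one_le_exp (y - x)]

end Real

theorem pi_mul_sqrt_two_thirds_lt : π * √(2 / 3) < 2.5652 := by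
  have hsqrt : √(2 / 3 : ℝ) < 0.8165 := by rw [sqrt_lt' (by norm_num)]; norm_num
  nlinarith [pi_lt_d6, pi_pos, sqrt_nonneg (2 / 3 : ℝ)]

theorem two_le_pi_mul_sqrt_two_thirds : 2 ≤ π * √(2 / 3) := by
  have hsqrt : 0.8 ≤ √(2 / 3 : ℝ) := by rw [le_sqrt (by norm_num) (by norm_num)]; norm_num
  nlinarith [pi_gt_three]

theorem sinh_pi_mul_sqrt_two_thirds_lt : sinh (π * √(2 / 3)) < 6.4635 := by
  have htaylor : exp 0.5652 ≤ 1.75981 := by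
    refine (exp_bound' (by norm_num) (by norm_num) (n := 8) (by norm_num)).trans ?_
    norm_num [Finset.sum_range_succ, Nat.factorial]
  have hexp : exp (π * √(2 / 3)) ≤ 13.0035 := by
    calc exp (π * √(2 / 3)) ≤ exp 1 ^ 2 * exp 0.5652 := by
          rw [← exp_nat_mul, ← exp_add]
          exact exp_le_exp.2 (by linarith [pi_mul_sqrt_two_thirds_lt])
      _ ≤ 2.7182818286 ^ 2 * 1.75981 := by
          gcongr
          exact exp_one_lt_d9.le
      _ ≤ 13.0035 := by norm_num
  calc sinh (π * √(2 / 3)) ≤ (13.0035 - 13.0035⁻¹) / 2 := sinh_le_of_exp_le hexp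
    _ < 6.4635 := by norm_num

theorem radeM_coeff_one_lt : 44 * π ^ 2 / (225 * √3) < 1.1144 := by
  have hsqrt : 1.732 ≤ √(3 : ℝ) := by rw [le_sqrt (by norm_num) (by norm_num)]; norm_num
  rw [div_lt_iff₀ (by positivity)]
  nlinarith [pi_lt_d6, pi_pos]

theorem radeM_coeff_two_lt : π * √2 / 75 < 0.05924 := by
  have hsqrt : √(2 : ℝ) < 1.4142136 := by rw [sqrt_lt' (by norm_num)]; norm_num
  nlinarith [pi_lt_d6, pi_pos, sqrt_nonneg (2 : ℝ)]

theorem radeM_eq (n N : ℕ) :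
    radeM n N = 44 * π ^ 2 / (225 * √3) / √N
      + π * √2 / 75 * √(N / (n - 1)) * sinh (π * √(2 / 3) * (√n / N)) := by
  rw [radeM, rpow_neg (Nat.cast_nonneg N), ← sqrt_eq_rpow, ← sqrt_eq_rpow,
    show (2 * n / 3 : ℝ) = 2 / 3 * n by ring, sqrt_mul (by norm_num)]
  ring_nf

theorem eighty_le_sq_sub_one_mul_sq {s a : ℝ} (hs8 : 8 ≤ s) (hs9 : s ≤ 9) (ha : 2 ≤ a) :
    80 ≤ (s ^ 2 - 1) * (1 + a * (1 - s / 9)) ^ 2 := by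
  have h1 : 1 + 2 * (1 - s / 9) ≤ 1 + a * (1 - s / 9) := by nlinarith
  have h2 : 80 ≤ (s ^ 2 - 1) * (1 + 2 * (1 - s / 9)) ^ 2 := by
    have ht0 : 0 ≤ 9 - s := by linarith
    have ht1 : 0 ≤ 1 - (9 - s) := by linarith
    nlinarith [mul_nonneg ht0 ht1, mul_nonneg (mul_nonneg ht0 ht0) ht1, pow_nonneg ht0 3,
      pow_nonneg ht0 4]
  nlinarith [mul_le_mul h1 h1 (by nlinarith) (by nlinarith)]

theorem radeM_lt_half_of_le {n N : ℕ} {u v : ℝ} (hu : (√N)⁻¹ ≤ u)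
    (hv : √(N / (n - 1)) * sinh (π * √(2 / 3) * (√n / N)) ≤ v * sinh (π * √(2 / 3)))
    (huv : 1.1144 * u + 0.05924 * (v * 6.4635) < 1 / 2) :
    radeM n N < 1 / 2 := by
  have hS : 0 < sinh (π * √(2 / 3)) := sinh_pos_iff.2 (by positivity)
  have hsinh : 0 ≤ √(N / (n - 1)) * sinh (π * √(2 / 3) * (√n / N)) :=
    mul_nonneg (sqrt_nonneg _) (sinh_nonneg_iff.2 (by positivity))
  have hv0 : 0 ≤ v := nonneg_of_mul_nonneg_left (hsinh.trans hv) hS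
  have hfirst : 44 * π ^ 2 / (225 * √3) * (√N)⁻¹ ≤ 1.1144 * u :=
    mul_le_mul radeM_coeff_one_lt.le hu (inv_nonneg.2 (sqrt_nonneg _)) (by norm_num)
  have hsecond : π * √2 / 75 * (√(N / (n - 1)) * sinh (π * √(2 / 3) * (√n / N)))
      ≤ 0.05924 * (v * 6.4635) :=
    mul_le_mul radeM_coeff_two_lt.le
      (hv.trans (mul_le_mul_of_nonneg_left sinh_pi_mul_sqrt_two_thirds_lt.le hv0)) hsinh
      (by norm_num)
  rw [radeM_eq, div_eq_mul_inv, mul_assoc (π * √2 / 75)]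
  linarith

theorem sqrt_nine_div_mul_sinh_le {s a : ℝ} (hs8 : 8 ≤ s) (hs9 : s ≤ 9) (ha : 2 ≤ a) :
    √(9 / (s ^ 2 - 1)) * sinh (a * (s / 9)) ≤ √(9 / 80) * sinh a := by
  have hgap : 0 ≤ a - a * (s / 9) := by nlinarith
  have hsinh : sinh (a * (s / 9)) ≤ sinh a / (1 + (a - a * (s / 9))) :=
    sinh_le_sinh_div_one_add_sub (by linarith) (by linarith)
  have hsqrt : √(9 / (s ^ 2 - 1)) / (1 + (a - a * (s / 9))) ≤ √(9 / 80) := by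
    rw [div_le_iff₀ (by linarith), ← sqrt_sq (by linarith : 0 ≤ 1 + (a - a * (s / 9))),
      ← sqrt_mul (by norm_num)]
    refine sqrt_le_sqrt ?_
    rw [div_le_iff₀ (by nlinarith)]
    linarith [eighty_le_sq_sub_one_mul_sq hs8 hs9 ha]
  calc √(9 / (s ^ 2 - 1)) * sinh (a * (s / 9))
      ≤ √(9 / (s ^ 2 - 1)) * (sinh a / (1 + (a - a * (s / 9)))) := by gcongr
    _ = √(9 / (s ^ 2 - 1)) / (1 + (a - a * (s / 9))) * sinh a := by ring
    _ ≤ √(9 / 80) * sinh a := by gcongr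

theorem radeM_nine_lt_half {n : ℕ} (h8 : 8 ≤ √n) (h9 : √n ≤ 9) : radeM n 9 < 1 / 2 := by
  have hn : (√n) ^ 2 = n := sq_sqrt (Nat.cast_nonneg n)
  have hsqrt9 : √((9 : ℕ) : ℝ) = 3 := by
    rw [show ((9 : ℕ) : ℝ) = 3 ^ 2 by norm_num, sqrt_sq (by norm_num)]
  have hsqrt80 : √(9 / 80 : ℝ) ≤ 0.33542 := by rw [sqrt_le_left (by norm_num)]; norm_num
  refine radeM_lt_half_of_le (u := 1 / 3) (v := 0.33542) (by rw [hsqrt9]; norm_num) ?_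
    (by norm_num)
  have key := sqrt_nine_div_mul_sinh_le h8 h9 two_le_pi_mul_sqrt_two_thirds
  rw [hn] at key
  push_cast
  exact key.trans (by gcongr)

theorem radeM_lt_half_of_ten_le {n N : ℕ} (hN : 10 ≤ N) (hsN : √n ≤ N) (hNs : N ≤ √n + 1) :
    radeM n N < 1 / 2 := by
  have hN' : (10 : ℝ) ≤ N := by exact_mod_cast hN
  have hn : (√n) ^ 2 = n := sq_sqrt (Nat.cast_nonneg n)
  have hu : (√N)⁻¹ ≤ 0.32 := by
    rw [inv_le_comm₀ (by positivity) (by norm_num), le_sqrt (by norm_num) (by positivity)]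
    linarith
  have hratio : (N : ℝ) / (n - 1) ≤ 1 / 8 := by
    rw [div_le_iff₀ (by nlinarith)]
    nlinarith
  have hsinh : sinh (π * √(2 / 3) * (√n / N)) ≤ sinh (π * √(2 / 3)) := by
    rw [sinh_le_sinh]
    refine mul_le_of_le_one_right (by positivity) ?_
    rw [div_le_one (by positivity)]
    exact hsN
  refine radeM_lt_half_of_le (v := 0.36) hu ?_ (by norm_num)
  exact mul_le_mul ((sqrt_le_left (by norm_num)).2 (hratio.trans (by norm_num))) hsinh
    (sinh_nonneg_iff.2 (by positivity)) (by norm_num)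

theorem radeM_lt_half (n : ℕ) (hn : 65 ≤ n) : radeM n ⌈Real.sqrt n⌉₊ < 1 / 2 := by
  have h8 : 8 < √n := by
    rw [lt_sqrt (by norm_num)]
    exact_mod_cast (show 8 ^ 2 < n by omega)
  rcases le_or_gt ⌈√n⌉₊ 9 with h9 | h10
  · have hN : ⌈√n⌉₊ = 9 := le_antisymm h9 (Nat.lt_ceil.2 (by exact_mod_cast h8))
    rw [hN]
    exact radeM_nine_lt_half h8.le (by exact_mod_cast Nat.ceil_le.1 h9)
  · exact radeM_lt_half_of_ten_le h10 (Nat.le_ceil _) (Nat.ceil_lt_add_one (sqrt_nonneg _)).le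
end

section
/- For every positive integer k and integer n, the number of integers l with 0 ≤ l < 2k satisfying (3l² + l)/2 ≡ −n (mod k) is at most 2·⌈2√k⌉ + 2; in particular it is O(k^{1/2}). -/
/-! With `f = 3X² + X + 2n` the congruence says `2k ∣ f(l)`, so it suffices to show that `f` has
at most `2√k` roots modulo `2k`. By the Chinese remainder theorem root counts are submultiplicative
over coprime moduli, and `f(x) - f(y) = (x - y)(3(x + y) + 1)`. Modulo `2^a` the second factor is
odd when `x ≡ y (mod 2)`, and modulo `3^b` it is a unit, leaving at most 2 resp. 1 root. Modulo
`p^e` with `p ≥ 5` and `h = ⌈e/2⌉`: either every root has `p^h ∣ 6x + 1`, which pins `x` modulo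
`p^h`, or some root `y₀` has `p^h ∤ 6y₀ + 1`; since `6y₀ + 1 = (3(x + y₀) + 1) - 3(x - y₀)`, every
root then lies in one of two classes modulo `p^(e-h+1)`. Either way there are at most `√(p^e)`
roots. -/

open Filter Finset Polynomial

theorem Prime.pow_dvd_of_pow_add_dvd_mul {M : Type*} [CommMonoidWithZero M] [IsCancelMulZero M]
    {p a b : M} (hp : Prime p) {i j : ℕ} (ha : ¬p ^ (i + 1) ∣ a) (h : p ^ (i + j) ∣ a * b) : p ^ j ∣ b := by
  induction i generalizing a with
  | zero => exact hp.pow_dvd_of_dvd_mul_left j (by simpa using ha) (by simpa using h)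
  | succ i ih =>
    by_cases hpa : p ∣ a
    · obtain ⟨a, rfl⟩ := hpa
      refine ih (a := a) (fun h' => ha ?_) ?_
      · rw [pow_succ' p (i + 1)]
        exact mul_dvd_mul_left p h'
      · rw [← mul_dvd_mul_iff_left hp.ne_zero, ← pow_succ', ← mul_assoc]
        rwa [add_right_comm] at h
    · exact (pow_dvd_pow p (by omega)).trans (hp.pow_dvd_of_dvd_mul_left _ hpa h)

theorem Finset.card_le_of_forall_dvd_sub {D t : ℕ} {S : Finset ℕ} (hS : S ⊆ range (D * t))
    (h : ∀ x ∈ S, ∀ y ∈ S, (D : ℤ) ∣ x - y) : #S ≤ t := by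
  simpa using card_le_card_of_injOn (· / D) (t := range t)
    (fun x hx => mem_range.2 (Nat.div_lt_of_lt_mul (mem_range.1 (hS hx))))
    (fun x hx y hy hxy => by
      have hmod : x % D = y % D := Nat.modEq_iff_dvd.2 (h y hy x hx)
      rw [← Nat.div_add_mod x D, ← Nat.div_add_mod y D, show x / D = y / D from hxy, hmod])

def rootsMod (f : ℤ[X]) (m : ℕ) : Finset ℕ :=
  (range m).filter fun x => (m : ℤ) ∣ f.eval (x : ℤ)

section rootsMod

variable {f : ℤ[X]} {m n x : ℕ}

theorem mem_rootsMod : x ∈ rootsMod f m ↔ x < m ∧ (m : ℤ) ∣ f.eval (x : ℤ) := by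
  simp [rootsMod]

theorem rootsMod_subset_range : rootsMod f m ⊆ range m :=
  filter_subset _ _

theorem mod_mem_rootsMod_of_dvd (hx : x ∈ rootsMod f m) (hn : 0 < n) (hnm : n ∣ m) :
    x % n ∈ rootsMod f n := by
  rw [mem_rootsMod] at hx ⊢
  refine ⟨Nat.mod_lt x hn, ?_⟩
  have hsub : (n : ℤ) ∣ f.eval (x : ℤ) - f.eval ((x % n : ℕ) : ℤ) :=
    (Nat.modEq_iff_dvd.1 (Nat.mod_modEq x n)).trans (sub_dvd_eval_sub _ _ f)
  simpa using ((Int.natCast_dvd_natCast.2 hnm).trans hx.2).sub hsub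

theorem card_rootsMod_mul_le (f : ℤ[X]) (hmn : m.Coprime n) :
    #(rootsMod f (m * n)) ≤ #(rootsMod f m) * #(rootsMod f n) := by
  rcases Nat.eq_zero_or_pos (m * n) with h0 | hpos
  · simp [h0, rootsMod]
  rw [← card_product]
  refine card_le_card_of_injOn (fun x => (x % m, x % n)) (fun x hx => ?_) (fun x hx y hy hxy => ?_)
  · exact mem_product.2 ⟨mod_mem_rootsMod_of_dvd hx (Nat.pos_of_mul_pos_right hpos)
      (dvd_mul_right m n), mod_mem_rootsMod_of_dvd hx (Nat.pos_of_mul_pos_left hpos)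
      (dvd_mul_left n m)⟩
  · simp only [Prod.mk.injEq] at hxy
    exact ((Nat.modEq_and_modEq_iff_modEq_mul hmn).1 hxy).eq_of_lt_of_lt
      (mem_rootsMod.1 hx).1 (mem_rootsMod.1 hy).1

end rootsMod

noncomputable def pentagonalPoly (c : ℤ) : ℤ[X] := 3 * X ^ 2 + X + C c

section pentagonalPoly

variable {c : ℤ}

theorem eval_pentagonalPoly (c x : ℤ) : (pentagonalPoly c).eval x = 3 * x ^ 2 + x + c := by
  simp [pentagonalPoly]

theorem dvd_sub_mul_of_mem_rootsMod {m x y : ℕ} (hx : x ∈ rootsMod (pentagonalPoly c) m)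
    (hy : y ∈ rootsMod (pentagonalPoly c) m) :
    (m : ℤ) ∣ (x - y) * (3 * (x + y) + 1) := by
  have h := (mem_rootsMod.1 hx).2.sub (mem_rootsMod.1 hy).2
  rw [eval_pentagonalPoly, eval_pentagonalPoly] at h
  exact h.trans (dvd_of_eq (by ring))

theorem card_rootsMod_pentagonalPoly_three_pow_le (c : ℤ) (b : ℕ) :
    #(rootsMod (pentagonalPoly c) (3 ^ b)) ≤ 1 :=
  card_le_of_forall_dvd_sub (by simpa using rootsMod_subset_range) fun x hx y hy => by
    have h := dvd_sub_mul_of_mem_rootsMod hx hy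
    push_cast at h ⊢
    exact Int.prime_three.pow_dvd_of_dvd_mul_right b (by omega) h

theorem card_rootsMod_pentagonalPoly_le_of_not_dvd {p e i y₀ : ℕ} (hp : Prime (p : ℤ))
    (hp3 : ¬(p : ℤ) ∣ 3) (hie : i ≤ e) (hy₀ : y₀ ∈ rootsMod (pentagonalPoly c) (p ^ e))
    (hpy₀ : ¬(p : ℤ) ^ (i + 1) ∣ 6 * y₀ + 1) :
    #(rootsMod (pentagonalPoly c) (p ^ e)) ≤ 2 * p ^ i := by
  set S := rootsMod (pentagonalPoly c) (p ^ e)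
  obtain ⟨j, rfl⟩ := Nat.exists_eq_add_of_le hie
  have hsplit : ∀ y ∈ S, (p : ℤ) ^ j ∣ y - y₀ ∨ (p : ℤ) ^ j ∣ 3 * (y + y₀) + 1 := by
    intro y hy
    have hprod : (p : ℤ) ^ (i + j) ∣ (y - y₀) * (3 * (y + y₀) + 1) := by
      exact_mod_cast dvd_sub_mul_of_mem_rootsMod hy hy₀
    by_cases hdiff : (p : ℤ) ^ (i + 1) ∣ y - y₀
    · -- `6 y₀ + 1 = (3 (y + y₀) + 1) - 3 (y - y₀)`, so `p ^ (i + 1)` divides only one factor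
      refine .inl (hp.pow_dvd_of_pow_add_dvd_mul (fun h => hpy₀ ?_) (mul_comm (y - y₀ : ℤ) _ ▸ hprod))
      exact (h.sub (dvd_mul_of_dvd_right hdiff 3)).trans (dvd_of_eq (by ring))
    · exact .inr (hp.pow_dvd_of_pow_add_dvd_mul hdiff hprod)
  have hrange : S ⊆ range (p ^ j * p ^ i) := by
    rw [← pow_add, add_comm]
    exact rootsMod_subset_range
  have hS : S = S.filter (fun y : ℕ => (p : ℤ) ^ j ∣ y - y₀) ∪
      S.filter (fun y : ℕ => (p : ℤ) ^ j ∣ 3 * (y + y₀) + 1) := by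
    rw [← filter_or, filter_true_of_mem hsplit]
  rw [hS, two_mul]
  refine (card_union_le _ _).trans (add_le_add ?_ ?_) <;>
    refine card_le_of_forall_dvd_sub ((filter_subset _ _).trans hrange) fun x hx y hy => ?_ <;>
    simp only [mem_filter] at hx hy <;> push_cast
  · exact (hx.2.sub hy.2).trans (dvd_of_eq (by ring))
  · exact hp.pow_dvd_of_dvd_mul_left j hp3 ((hx.2.sub hy.2).trans (dvd_of_eq (by ring)))

theorem sq_card_rootsMod_pentagonalPoly_prime_pow_le {p : ℕ} (hp : p.Prime) (hp5 : 5 ≤ p)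
    (c : ℤ) (e : ℕ) : #(rootsMod (pentagonalPoly c) (p ^ e)) ^ 2 ≤ p ^ e := by
  set S := rootsMod (pentagonalPoly c) (p ^ e)
  have hpZ : Prime (p : ℤ) := Nat.prime_iff_prime_int.1 hp
  have hp_not_dvd : ∀ d : ℕ, 0 < d → d ≤ 6 → d ≠ 5 → ¬(p : ℤ) ∣ d := by
    intro d hd hd6 hd5 h
    have h' := Int.natCast_dvd_natCast.1 h
    have := Nat.le_of_dvd hd h'
    interval_cases d <;> interval_cases p <;> norm_num at *
  set h := (e + 1) / 2
  by_cases hall : ∀ y ∈ S, (p : ℤ) ^ h ∣ 6 * y + 1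
  · have hcard : #S ≤ p ^ (e - h) := by
      refine card_le_of_forall_dvd_sub (D := p ^ h) ?_ fun x hx y hy => ?_
      · rw [← pow_add, Nat.add_sub_cancel' (by omega)]
        exact rootsMod_subset_range
      · push_cast
        exact hpZ.pow_dvd_of_dvd_mul_left h (hp_not_dvd 6 (by norm_num) le_rfl (by norm_num))
          (((hall x hx).sub (hall y hy)).trans (dvd_of_eq (by ring)))
    calc #S ^ 2 ≤ (p ^ (e - h)) ^ 2 := by gcongr
      _ = p ^ (2 * (e - h)) := by ring
      _ ≤ p ^ e := Nat.pow_le_pow_right hp.pos (by omega)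
  · push Not at hall
    obtain ⟨y₀, hy₀, hpy₀⟩ := hall
    obtain ⟨i, hi⟩ : ∃ i, h = i + 1 :=
      Nat.exists_eq_add_one.2 (Nat.pos_of_ne_zero fun h0 => hpy₀ (by simp [h0]))
    have hcard : #S ≤ 2 * p ^ i :=
      card_rootsMod_pentagonalPoly_le_of_not_dvd hpZ
        (hp_not_dvd 3 (by norm_num) (by norm_num) (by norm_num)) (by omega) hy₀ (hi ▸ hpy₀)
    calc #S ^ 2 ≤ (2 * p ^ i) ^ 2 := by gcongr
      _ = 4 * p ^ (2 * i) := by ring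
      _ ≤ p * p ^ (2 * i) := by gcongr; omega
      _ = p ^ (2 * i + 1) := by ring
      _ ≤ p ^ e := Nat.pow_le_pow_right hp.pos (by omega)

theorem sq_card_rootsMod_pentagonalPoly_le_of_odd (c : ℤ) {m : ℕ} (hm : Odd m) :
    #(rootsMod (pentagonalPoly c) m) ^ 2 ≤ m := by
  induction m using Nat.recOnPosPrimePosCoprime with
  | prime_pow p e hp he =>
    have hp2 : p ≠ 2 := by
      rintro rfl
      exact Nat.not_even_iff_odd.2 hm (Nat.even_pow.2 ⟨even_two, he.ne'⟩)
    obtain rfl | hp5 : p = 3 ∨ 5 ≤ p := by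
      have := hp.two_le
      by_contra! ⟨h3, h5⟩
      interval_cases p <;> norm_num at *
    · calc _ ≤ 1 ^ 2 := by gcongr; exact card_rootsMod_pentagonalPoly_three_pow_le c e
        _ ≤ 3 ^ e := Nat.one_le_pow _ _ (by norm_num)
    · exact sq_card_rootsMod_pentagonalPoly_prime_pow_le hp hp5 c e
  | zero => exact absurd hm (by decide)
  | one => simpa using card_le_card (rootsMod_subset_range (f := pentagonalPoly c) (m := 1))
  | coprime a b _ _ hab iha ihb =>
    obtain ⟨ha, hb⟩ := Nat.odd_mul.1 hm
    calc _ ≤ (#(rootsMod (pentagonalPoly c) a) * #(rootsMod (pentagonalPoly c) b)) ^ 2 := by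
          gcongr
          exact card_rootsMod_mul_le _ hab
      _ = #(rootsMod (pentagonalPoly c) a) ^ 2 * #(rootsMod (pentagonalPoly c) b) ^ 2 :=
          mul_pow _ _ _
      _ ≤ a * b := Nat.mul_le_mul (iha ha) (ihb hb)

theorem sq_card_rootsMod_pentagonalPoly_two_mul_le (c : ℤ) (k : ℕ) :
    #(rootsMod (pentagonalPoly c) (2 * k)) ^ 2 ≤ 4 * k := by
  rcases Nat.eq_zero_or_pos k with rfl | hk
  · simp [rootsMod]
  obtain ⟨a, m, hm, hkm⟩ := Nat.exists_eq_two_pow_mul_odd (n := 2 * k) (by omega)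
  have ha : 1 ≤ a := by
    by_contra! ha
    obtain ⟨r, hr⟩ := hm
    simp [Nat.lt_one_iff.1 ha] at hkm
    omega
  have htwo : #(rootsMod (pentagonalPoly c) (2 ^ a)) ≤ 2 := by
    rcases (rootsMod (pentagonalPoly c) (2 ^ a)).eq_empty_or_nonempty with h | ⟨y₀, hy₀⟩
    · simp [h]
    · simpa using card_rootsMod_pentagonalPoly_le_of_not_dvd (i := 0) Int.prime_two
        (by norm_num) (Nat.zero_le a) hy₀ (by simp only [zero_add, pow_one]; omega)
  have h2a : 2 * m ≤ 2 ^ a * m := Nat.mul_le_mul_right m (Nat.le_self_pow (by omega) 2)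
  calc _ = #(rootsMod (pentagonalPoly c) (2 ^ a * m)) ^ 2 := by rw [hkm]
    _ ≤ (#(rootsMod (pentagonalPoly c) (2 ^ a)) * #(rootsMod (pentagonalPoly c) m)) ^ 2 := by
        gcongr
        exact card_rootsMod_mul_le _ (Nat.Coprime.pow_left a (Nat.coprime_two_left.2 hm))
    _ = #(rootsMod (pentagonalPoly c) (2 ^ a)) ^ 2 * #(rootsMod (pentagonalPoly c) m) ^ 2 :=
        mul_pow _ _ _
    _ ≤ 2 ^ 2 * m := Nat.mul_le_mul (by gcongr) (sq_card_rootsMod_pentagonalPoly_le_of_odd c hm)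
    _ ≤ 4 * k := by linarith

end pentagonalPoly

theorem filter_pentagonal_modEq_eq_rootsMod (k : ℕ) (n : ℤ) :
    (range (2 * k)).filter (fun l : ℕ => (3 * (l : ℤ) ^ 2 + l) / 2 ≡ -n [ZMOD k]) =
      rootsMod (pentagonalPoly (2 * n)) (2 * k) := by
  refine filter_congr fun l _ => ?_
  obtain ⟨r, hr⟩ := Int.even_mul_succ_self (l : ℤ)
  have ht : 3 * (l : ℤ) ^ 2 + l = 2 * (r + l ^ 2) := by linear_combination hr
  rw [eval_pentagonalPoly, ht, Int.mul_ediv_cancel_left _ two_ne_zero, Int.modEq_iff_dvd,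
    show -n - (r + l ^ 2) = -(r + l ^ 2 + n) by ring, dvd_neg,
    show 2 * (r + l ^ 2) + 2 * n = 2 * (r + l ^ 2 + n) by ring, Nat.cast_mul, Nat.cast_two,
    mul_dvd_mul_iff_left two_ne_zero]

theorem card_filter_pentagonal_modEq_le (k : ℕ) (n : ℤ) :
    #((range (2 * k)).filter fun l : ℕ => (3 * (l : ℤ) ^ 2 + l) / 2 ≡ -n [ZMOD k]) ≤
      ⌈2 * √k⌉₊ := by
  rw [filter_pentagonal_modEq_eq_rootsMod]
  refine Nat.cast_le.1 (le_trans ?_ (Nat.le_ceil _))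
  calc _ ≤ √(4 * k) := Real.le_sqrt_of_sq_le
        (by exact_mod_cast sq_card_rootsMod_pentagonalPoly_two_mul_le (2 * n) k)
    _ = 2 * √k := by
        rw [Real.sqrt_mul (by norm_num), show (4 : ℝ) = 2 ^ 2 by norm_num,
          Real.sqrt_sq (by norm_num)]

theorem pentagonal_congruence_solution_count :
    (∀ k : ℕ, 0 < k → ∀ n : ℤ,
      ((Finset.range (2 * k)).filter fun l : ℕ =>
          ((3 * (l : ℤ) ^ 2 + l) / 2) ≡ -n [ZMOD (k : ℤ)]).card ≤
        2 * ⌈2 * Real.sqrt k⌉₊ + 2) ∧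
    ∀ n : ℤ,
      (fun k : ℕ => (((Finset.range (2 * k)).filter fun l : ℕ =>
          ((3 * (l : ℤ) ^ 2 + l) / 2) ≡ -n [ZMOD (k : ℤ)]).card : ℝ)) =O[atTop]
        fun k : ℕ => Real.sqrt k := by
  refine ⟨fun k _ n => (card_filter_pentagonal_modEq_le k n).trans (by omega), fun n => ?_⟩
  refine Asymptotics.IsBigO.of_bound 3 ?_
  filter_upwards [eventually_ge_atTop 1] with k hk
  have hsqrt : (1 : ℝ) ≤ √k := Real.one_le_sqrt.2 (by exact_mod_cast hk)
  rw [Real.norm_natCast, Real.norm_of_nonneg (Real.sqrt_nonneg _)]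
  calc _ ≤ (⌈2 * √k⌉₊ : ℝ) := by exact_mod_cast card_filter_pentagonal_modEq_le k n
    _ ≤ 2 * √k + 1 := (Nat.ceil_lt_add_one (by positivity)).le
    _ ≤ 3 * √k := by linarith
end

section
/- The function U(x) = cosh(x) − sinh(x)/x is positive and strictly increasing on (0, ∞), and satisfies U(x) < e^x / 2 for all x > 0. -/
open Real

/-- `U(x) = cosh x - sinh x / x`. -/
noncomputable def radeU (x : ℝ) : ℝ := Real.cosh x - Real.sinh x / x

/-!
Put `g x = x cosh x - sinh x`, so that `U x = g x / x`. Since `g 0 = 0` and `g' x = x sinh x > 0`,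
`g` is positive on `(0, ∞)`, hence so is `U`. The numerator of
`U' x = ((x² + 1) sinh x - x cosh x) / x²` also vanishes at `0` and has derivative
`x sinh x + x² cosh x > 0`, so `U` is strictly increasing. Finally `U x < e^x / 2` amounts to
`e^{-x} / 2 < sinh x / x`, and the right side exceeds `1` because `x < sinh x`.
-/

theorem pos_of_hasDerivAt_of_pos {f f' : ℝ → ℝ} (hf : ∀ y, HasDerivAt f (f' y) y)
    (hf' : ∀ y, 0 < y → 0 < f' y) (h0 : f 0 = 0) {x : ℝ} (hx : 0 < x) : 0 < f x := by
  have hmono : StrictMonoOn f (Set.Ici 0) :=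
    strictMonoOn_of_hasDerivWithinAt_pos (convex_Ici 0)
      (fun y _ => (hf y).continuousAt.continuousWithinAt) (fun y _ => (hf y).hasDerivWithinAt)
      (fun y hy => hf' y (by simpa using hy))
  simpa [h0] using hmono Set.self_mem_Ici hx.le hx

theorem sinh_lt_mul_cosh {x : ℝ} (hx : 0 < x) : sinh x < x * cosh x := by
  have hderiv (y : ℝ) : HasDerivAt (fun y => y * cosh y - sinh y) (y * sinh y) y := by
    refine (((hasDerivAt_id' y).mul (hasDerivAt_cosh y)).sub (hasDerivAt_sinh y)).congr_deriv ?_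
    ring
  have := pos_of_hasDerivAt_of_pos hderiv (fun y hy => mul_pos hy (sinh_pos_iff.mpr hy))
    (by simp) hx
  linarith

theorem mul_cosh_lt_sq_add_one_mul_sinh {x : ℝ} (hx : 0 < x) :
    x * cosh x < (x ^ 2 + 1) * sinh x := by
  have hderiv (y : ℝ) : HasDerivAt (fun y => (y ^ 2 + 1) * sinh y - y * cosh y)
      (y * sinh y + y ^ 2 * cosh y) y := by
    refine ((((hasDerivAt_pow 2 y).add_const 1).mul (hasDerivAt_sinh y)).sub
      ((hasDerivAt_id' y).mul (hasDerivAt_cosh y))).congr_deriv ?_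
    push_cast
    ring
  have hderiv_pos (y : ℝ) (hy : 0 < y) : 0 < y * sinh y + y ^ 2 * cosh y := by
    have := sinh_pos_iff.mpr hy
    positivity
  have := pos_of_hasDerivAt_of_pos hderiv hderiv_pos (by simp) hx
  linarith

theorem hasDerivAt_radeU {x : ℝ} (hx : x ≠ 0) :
    HasDerivAt radeU (((x ^ 2 + 1) * sinh x - x * cosh x) / x ^ 2) x := by
  refine ((hasDerivAt_cosh x).sub ((hasDerivAt_sinh x).div (hasDerivAt_id' x) hx)).congr_deriv ?_
  field_simp
  ring

theorem radeU_pos {x : ℝ} (hx : 0 < x) : 0 < radeU x := by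
  rw [radeU, sub_pos, div_lt_iff₀ hx, mul_comm]
  exact sinh_lt_mul_cosh hx

theorem radeU_strictMonoOn : StrictMonoOn radeU (Set.Ioi 0) := by
  refine strictMonoOn_of_hasDerivWithinAt_pos (convex_Ioi 0)
    (f' := fun x => ((x ^ 2 + 1) * sinh x - x * cosh x) / x ^ 2)
    (fun x hx => (hasDerivAt_radeU (ne_of_gt hx)).continuousAt.continuousWithinAt) ?_ ?_ <;>
    simp only [interior_Ioi, Set.mem_Ioi]
  · exact fun x hx => (hasDerivAt_radeU hx.ne').hasDerivWithinAt
  · intro x hx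
    have := mul_cosh_lt_sq_add_one_mul_sinh hx
    exact div_pos (by linarith) (pow_pos hx 2)

theorem radeU_lt_exp_div_two {x : ℝ} (hx : 0 < x) : radeU x < exp x / 2 := by
  have h_sinh_div : 1 < sinh x / x := by
    rw [one_lt_div hx]
    exact self_lt_sinh_iff.mpr hx
  have h_exp_neg : exp (-x) < 1 := exp_lt_one_iff.mpr (neg_neg_of_pos hx)
  rw [radeU, cosh_eq]
  linarith

theorem radeU_pos_strictMono_lt :
    (∀ x : ℝ, 0 < x → 0 < radeU x) ∧
    StrictMonoOn radeU (Set.Ioi 0) ∧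
    ∀ x : ℝ, 0 < x → radeU x < Real.exp x / 2 :=
  ⟨fun _ => radeU_pos, radeU_strictMonoOn, fun _ => radeU_lt_exp_div_two⟩
end

section
/- Let p, q be integers with 0 < 4p < q, and set x = pπ/q ∈ (0, π/4). If x̂ = x(1+δ_x) also lies in (0, π/4), then |cos(x̂) − cos(x)| / cos(x) ≤ (π√2/4) |δ_x|. -/
open Real

theorem cos_relative_error (p q : ℤ) (hp : 0 < 4 * p) (hq : 4 * p < q)
    (δ : ℝ)
    (hhat : (p : ℝ) * π / q * (1 + δ) ∈ Set.Ioo (0 : ℝ) (π / 4)) :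
    |Real.cos ((p : ℝ) * π / q * (1 + δ)) - Real.cos ((p : ℝ) * π / q)| /
        Real.cos ((p : ℝ) * π / q) ≤ π * Real.sqrt 2 / 4 * |δ| := by
  have hpπ := Real.pi_pos
  have hq0 : (0:ℝ) < q := by exact_mod_cast (lt_trans hp hq : (0:ℤ) < q)
  have hp0 : (0:ℝ) < p := by
    have : (0:ℤ) < p := by linarith
    exact_mod_cast this
  have hpq : 4 * (p:ℝ) < q := by exact_mod_cast hq
  set x := (p : ℝ) * π / q with hxdef
  have hx0 : 0 < x := by positivity
  have hx4 : x < π / 4 := by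
    rw [hxdef, div_lt_div_iff₀ hq0 (by norm_num)]
    nlinarith
  have hc : Real.sqrt 2 / 2 ≤ Real.cos x := by
    rw [← Real.cos_pi_div_four]
    exact Real.cos_le_cos_of_nonneg_of_le_pi hx0.le (by linarith) hx4.le
  have hnum : |Real.cos (x * (1 + δ)) - Real.cos x| ≤ x * |δ| := by
    rw [Real.cos_sub_cos]
    have h1 : |Real.sin ((x * (1 + δ) + x) / 2)| ≤ 1 := Real.abs_sin_le_one _
    have h2 : |Real.sin ((x * (1 + δ) - x) / 2)| ≤ |(x * (1 + δ) - x) / 2| :=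
      Real.abs_sin_le_abs
    have h3 : |(x * (1 + δ) - x) / 2| = x * |δ| / 2 := by
      rw [show x * (1 + δ) - x = x * δ by ring, abs_div, abs_mul,
        abs_of_pos hx0]
      norm_num
    rw [abs_mul, abs_mul, abs_neg, abs_two]
    nlinarith [abs_nonneg (Real.sin ((x * (1 + δ) - x) / 2)),
      abs_nonneg (Real.sin ((x * (1 + δ) + x) / 2)), abs_nonneg δ]
  have hs2 : Real.sqrt 2 * Real.sqrt 2 = 2 := Real.mul_self_sqrt (by norm_num)
  have hs2pos : 0 < Real.sqrt 2 := by positivity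
  have hC : 0 < Real.cos x := lt_of_lt_of_le (by positivity) hc
  rw [div_le_iff₀ hC]
  have habs : 0 ≤ |δ| := abs_nonneg δ
  have key : π * Real.sqrt 2 / 4 * |δ| * (Real.sqrt 2 / 2) = π / 4 * |δ| := by
    linear_combination (π * |δ| / 8) * hs2
  nlinarith [mul_le_mul_of_nonneg_left hc (mul_nonneg (by positivity : (0:ℝ) ≤ π * Real.sqrt 2 / 4) habs),
    mul_le_mul_of_nonneg_right hx4.le habs]
end
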